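/- (Hermite) Let f be a complex polynomial of degree n with no real roots, and let f̄(z) = conj(f(conj z)). Let n₊ and n₋ be the number of positive and negative eigenvalues of the Hermitian matrix -i·B(f, f̄). If f and f̄ have no common roots, then f has exactly n₊ roots in the open upper half-plane and n₋ roots in the open lower half-plane (counted with multiplicity). -/

import Mathlib

/-!
Write `f = (X - α) g` for a root `α`. The Bezoutian satisfies the recursion
`B(f, f̄) = M B(g, ḡ) Mᴴ + (α - ᾱ) v vᴴ`, where `M` is the matrix of multiplication by `X - α` and
`v` is the coefficient vector of `ḡ`; since `-i (α - ᾱ) = 2 Im α`, induction gives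
`-i B(f, f̄) = W D Wᴴ` with `D = diag (2 Im α₁, …, 2 Im αₙ)` over the roots of `f`. The new column
`v` keeps `W` invertible because `ḡ(α) ≠ 0`, which is where coprimality of `f` and `f̄` enters.
Sylvester's law of inertia then says that `-i B(f, f̄)` has as many positive (negative)
eigenvalues as `D` has positive (negative) entries.
-/

open Polynomial

noncomputable def bezoutMatrix (n : ℕ) (f g : Polynomial ℂ) : Matrix (Fin n) (Fin n) ℂ :=
  fun i j =>
    (((f.map C * C g - C f * g.map C) /ₘ (X - C X)).coeff i).coeff j

open Matrix QuadraticMap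

namespace Polynomial

variable {R : Type*} [CommRing R]

noncomputable def mulMatrix (q : R[X]) (k m : ℕ) : Matrix (Fin k) (Fin m) R :=
  of fun i j => (q * X ^ (j : ℕ)).coeff i

theorem mulMatrix_mulVec (q : R[X]) {p : R[X]} {k m : ℕ} (hp : p.degree < m) :
    mulMatrix q k m *ᵥ (fun j : Fin m => p.coeff j) = fun i : Fin k => (q * p).coeff i := by
  have hsum : ∑ j : Fin m, C (p.coeff j) * X ^ (j : ℕ) = p := by
    rw [sum_fin (fun j a => C a * X ^ j) (by simp) hp, sum_C_mul_X_pow_eq]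
  ext i
  conv_rhs => rw [← hsum]
  simp only [mulMatrix, mulVec, dotProduct, of_apply, Finset.mul_sum, finsetSum_coeff]
  refine Finset.sum_congr rfl fun j _ => ?_
  rw [mul_left_comm, coeff_C_mul, mul_comm]

theorem transpose_mulMatrix_map_star [StarRing R] (q : R[X]) (k m : ℕ) :
    (mulMatrix (q.map (starRingEnd R)) k m)ᵀ = (mulMatrix q k m)ᴴ := by
  ext i j
  rw [transpose_apply, conjTranspose_apply, mulMatrix, mulMatrix, of_apply, of_apply,
    show q.map (starRingEnd R) * X ^ (i : ℕ) = (q * X ^ (i : ℕ)).map (starRingEnd R) by simp,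
    coeff_map]
  rfl

/-- A kernel vector `(c, y)` gives `c q + (X - a) p = 0`, where `p` has coefficients `U y`;
evaluating at `a` forces `c = 0`, and then `p = 0`. -/
theorem isUnit_of_cons_mulMatrix_X_sub_C_mul {K : Type*} [Field K] {m : ℕ} {a : K} {q : K[X]}
    (hq : q.degree < ↑(m + 1)) (hqa : q.eval a ≠ 0) {U : Matrix (Fin m) (Fin m) K}
    (hU : IsUnit U) :
    IsUnit (Matrix.of fun i : Fin (m + 1) => Fin.cons (q.coeff i)
      ((mulMatrix (X - C a) (m + 1) m * U : Matrix (Fin (m + 1)) (Fin m) K) i)) := by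
  rw [← mulVec_injective_iff_isUnit]
  refine (injective_iff_map_eq_zero (mulVecLin _)).2 fun x hx => ?_
  obtain ⟨c, y, rfl⟩ : ∃ c y, x = Fin.cons c y := ⟨x 0, Fin.tail x, (Fin.cons_self_tail x).symm⟩
  set p : K[X] := ((degreeLTEquiv K m).symm (U *ᵥ y) : K[X])
  have hp : p.degree < m := mem_degreeLT.mp ((degreeLTEquiv K m).symm _).2
  have hpy : (fun j : Fin m => p.coeff j) = U *ᵥ y := (degreeLTEquiv K m).apply_symm_apply _
  have hmem : C c * q + (X - C a) * p ∈ degreeLT K (m + 1) := by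
    refine mem_degreeLT.mpr ((degree_add_le _ _).trans_lt (max_lt ?_ ?_))
    · rw [← smul_eq_C_mul]
      exact (degree_smul_le _ _).trans_lt hq
    · rw [degree_mul, degree_X_sub_C, Nat.cast_succ, add_comm]
      exact WithBot.add_lt_add_right (by simp) hp
  have hr : C c * q + (X - C a) * p = 0 := by
    rw [← degreeLTEquiv_eq_zero_iff_eq_zero hmem, ← hx]
    change (fun i : Fin (m + 1) => (C c * q + (X - C a) * p).coeff i) = _ *ᵥ vecCons c y
    rw [mulVec_cons]
    change _ = c • (fun i : Fin (m + 1) => q.coeff i) + (mulMatrix (X - C a) (m + 1) m * U) *ᵥ y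
    rw [← mulVec_mulVec, ← hpy, mulMatrix_mulVec _ hp]
    ext i
    simp [coeff_C_mul]
  have hc : c = 0 := by simpa [hqa] using congrArg (eval a) hr
  have hp0 : p = 0 := by simpa [hc, X_sub_C_ne_zero] using hr
  have hy : y = 0 := mulVec_injective_iff_isUnit.mpr hU (by rw [← hpy, hp0, mulVec_zero]; rfl)
  rw [hc, hy]
  exact Matrix.cons_zero_zero

noncomputable def coeffMatrix (k m : ℕ) (P : R[X][X]) : Matrix (Fin k) (Fin m) R :=
  of fun i j => (P.coeff i).coeff j

theorem coeffMatrix_add (k m : ℕ) (P Q : R[X][X]) :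
    coeffMatrix k m (P + Q) = coeffMatrix k m P + coeffMatrix k m Q := by
  ext; simp [coeffMatrix]

theorem coeffMatrix_smul (k m : ℕ) (c : R) (P : R[X][X]) :
    coeffMatrix k m (c • P) = c • coeffMatrix k m P := by
  ext; simp [coeffMatrix]

theorem coeffMatrix_map_C_mul_C (k m : ℕ) (p q : R[X]) :
    coeffMatrix k m (p.map C * C q) =
      vecMulVec (fun i : Fin k => p.coeff i) (fun j : Fin m => q.coeff j) := by
  ext; simp [coeffMatrix, vecMulVec, coeff_mul_C, coeff_C_mul]

theorem coeffMatrix_map_C_mul (q : R[X]) {P : R[X][X]} {k l m : ℕ} (hP : P.degree < m) :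
    coeffMatrix k l (q.map C * P) = mulMatrix q k m * coeffMatrix m l P := by
  ext i j
  have hcoeff := congrFun (mulMatrix_mulVec (q.map C) (k := k) hP) i
  simp only [mulVec, dotProduct, mulMatrix, of_apply] at hcoeff
  simp only [coeffMatrix, mul_apply, mulMatrix, of_apply, ← hcoeff, finsetSum_coeff]
  refine Finset.sum_congr rfl fun j' _ => ?_
  rw [← Polynomial.map_X C, ← Polynomial.map_pow, ← Polynomial.map_mul, coeff_map, coeff_C_mul]

theorem coeff_coeff_swap (P : R[X][X]) (i j : ℕ) :
    ((Bivariate.swap P).coeff i).coeff j = (P.coeff j).coeff i := by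
  induction P using Polynomial.induction_on' with
  | add P Q hP hQ => simp [hP, hQ]
  | monomial n a =>
    induction a using Polynomial.induction_on' with
    | add a b ha hb => simp_all [map_add]
    | monomial m r =>
      simp only [Bivariate.swap_monomial_monomial, coeff_monomial]
      split_ifs <;> simp_all [coeff_monomial]

theorem coeffMatrix_swap (k m : ℕ) (P : R[X][X]) :
    coeffMatrix k m (Bivariate.swap P) = (coeffMatrix m k P)ᵀ := by
  ext; simp [coeffMatrix, coeff_coeff_swap]

theorem coeffMatrix_C_mul (q : R[X]) {P : R[X][X]} {k l m : ℕ}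
    (hP : (Bivariate.swap P).degree < m) :
    coeffMatrix k l (C q * P) = coeffMatrix k m P * (mulMatrix q l m)ᵀ := by
  rw [← transpose_transpose (coeffMatrix k l _), ← coeffMatrix_swap, map_mul, Bivariate.swap_C,
    coeffMatrix_map_C_mul q hP, transpose_mul, coeffMatrix_swap, transpose_transpose]

noncomputable def bezoutian (f g : R[X]) : R[X][X] :=
  (f.map C * C g - C f * g.map C) /ₘ (X - C X)

theorem X_sub_C_X_mul_bezoutian (f g : R[X]) :
    (X - C X) * bezoutian f g = f.map C * C g - C f * g.map C :=
  mul_divByMonic_eq_iff_isRoot.mpr <| by simp [IsRoot, eval_map, eval₂_C_X, mul_comm]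

theorem swap_bezoutian (f g : R[X]) : Bivariate.swap (bezoutian f g) = bezoutian f g := by
  refine (monic_X_sub_C (X : R[X])).isRegular.left ?_
  have h := congrArg Bivariate.swap (X_sub_C_X_mul_bezoutian f g)
  simp only [map_mul, map_sub, Bivariate.swap_C, Bivariate.swap_map_C, Bivariate.swap_Y,
    Polynomial.map_X] at h
  linear_combination -h - X_sub_C_X_mul_bezoutian f g

theorem degree_bezoutian_lt {f g : R[X]} {m : ℕ} (hf : f.natDegree ≤ m) (hg : g.natDegree ≤ m) :
    (bezoutian f g).degree < m := by
  nontriviality R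
  rcases eq_or_ne (f.map C * C g - C f * g.map C) 0 with hN | hN
  · rw [bezoutian, hN, zero_divByMonic, degree_zero]
    exact WithBot.bot_lt_coe m
  have hNdeg : (f.map C * C g - C f * g.map C).natDegree ≤ m := by
    refine (natDegree_sub_le _ _).trans (max_le ?_ ?_)
    · grw [natDegree_mul_le, natDegree_map_le, natDegree_C, add_zero, hf]
    · grw [natDegree_mul_le, natDegree_map_le, natDegree_C, zero_add, hg]
  refine (degree_divByMonic_lt _ _ hN ?_).trans_le (degree_le_natDegree.trans ?_)
  · rw [degree_X_sub_C]
    exact zero_lt_one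
  · exact_mod_cast hNdeg

theorem bezoutian_X_sub_C_mul (a b : R) (g h : R[X]) :
    bezoutian ((X - C a) * g) ((X - C b) * h) =
      (X - C a).map C * (C (X - C b) * bezoutian g h) + (a - b) • (h.map C * C g) := by
  refine (monic_X_sub_C (X : R[X])).isRegular.left ?_
  beta_reduce
  rw [X_sub_C_X_mul_bezoutian, mul_add, mul_left_comm, mul_left_comm (X - C X),
    X_sub_C_X_mul_bezoutian, Algebra.smul_def, Polynomial.algebraMap_apply,
    Polynomial.algebraMap_eq]
  simp only [Polynomial.map_mul, Polynomial.map_sub, Polynomial.map_X, Polynomial.map_C, C_mul,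
    C_sub]
  ring

theorem coeffMatrix_bezoutian_X_sub_C_mul (a b : R) {g h : R[X]} {m : ℕ} (hg : g.natDegree ≤ m)
    (hh : h.natDegree ≤ m) :
    coeffMatrix (m + 1) (m + 1) (bezoutian ((X - C a) * g) ((X - C b) * h)) =
      mulMatrix (X - C a) (m + 1) m * coeffMatrix m m (bezoutian g h) *
          (mulMatrix (X - C b) (m + 1) m)ᵀ +
        (a - b) • vecMulVec (fun i : Fin (m + 1) => h.coeff i)
          (fun j : Fin (m + 1) => g.coeff j) := by
  have hB := degree_bezoutian_lt hg hh
  have hCB : (C (X - C b) * bezoutian g h).degree < (m : WithBot ℕ) := by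
    rw [← smul_eq_C_mul]
    exact (degree_smul_le _ _).trans_lt hB
  rw [bezoutian_X_sub_C_mul, coeffMatrix_add, coeffMatrix_smul, coeffMatrix_map_C_mul_C,
    coeffMatrix_map_C_mul _ hCB, coeffMatrix_C_mul _ (by rwa [swap_bezoutian]), Matrix.mul_assoc]

end Polynomial

theorem ncard_setOf_fst_prod_fin_two {n : Type*} [Fintype n] (p : n → Prop) [DecidablePred p] :
    {q : n × Fin 2 | p q.1}.ncard = 2 * Fintype.card {k // p k} := by
  rw [← Nat.card_coe_set_eq, Set.coe_ofPred, Nat.card_congr Equiv.prodSubtypeFstEquivSubtypeProd,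
    Nat.card_prod, Nat.card_eq_fintype_card, Nat.card_eq_fintype_card, Fintype.card_fin, mul_comm]

noncomputable def complexPiEquivRealPi (n : Type*) : (n → ℂ) ≃ₗ[ℝ] (n × Fin 2 → ℝ) :=
  LinearEquiv.piCongrRight (fun _ => Complex.basisOneI.equivFun) ≪≫ₗ
    (LinearEquiv.curry ℝ ℝ n (Fin 2)).symm

theorem weightedSumSquares_complexPiEquivRealPi {n : Type*} [Fintype n] (d : n → ℝ)
    (x : n → ℂ) :
    weightedSumSquares ℝ (fun p : n × Fin 2 => d p.1) (complexPiEquivRealPi n x) =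
      ∑ k, d k * Complex.normSq (x k) := by
  simp [complexPiEquivRealPi, weightedSumSquares_apply, Fintype.sum_prod_type,
    Complex.normSq_apply, mul_add]

namespace Matrix

theorem of_cons_mul_diagonal_mul_conjTranspose {α : Type*} [CommSemiring α] [StarRing α]
    {k m : ℕ} (v : Fin k → α) (A : Matrix (Fin k) (Fin m) α) (d : Fin (m + 1) → α) :
    of (fun i => Fin.cons (v i) (A i)) * diagonal d * (of fun i => Fin.cons (v i) (A i))ᴴ =
      A * diagonal (fun j : Fin m => d j.succ) * Aᴴ + d 0 • vecMulVec v (star v) := by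
  ext i j
  rw [add_apply, mul_apply, mul_apply]
  simp only [mul_diagonal, Fin.sum_univ_succ, of_apply, conjTranspose_apply,
    Fin.cons_zero, Fin.cons_succ, smul_apply, vecMulVec_apply, Pi.star_apply,
    smul_eq_mul]
  ring

variable {n : Type*} [Fintype n]

/-- Taken over `ℝ` so that the signature `sigPos`/`sigNeg` of forms over ordered fields applies;
each complex coordinate then contributes two real squares. -/
noncomputable def hermitianForm (H : Matrix n n ℂ) : QuadraticForm ℝ (n → ℂ) :=
  LinearMap.BilinMap.toQuadraticMap <| LinearMap.mk₂ ℝ (fun x y => (star x ⬝ᵥ H *ᵥ y).re)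
    (fun x y z => by simp [add_dotProduct])
    (fun c x y => by simp [smul_dotProduct])
    (fun x y z => by simp [mulVec_add, dotProduct_add])
    (fun c x y => by simp [mulVec_smul, dotProduct_smul])

theorem hermitianForm_apply (H : Matrix n n ℂ) (x : n → ℂ) :
    H.hermitianForm x = (star x ⬝ᵥ H *ᵥ x).re := rfl

theorem hermitianForm_mul_mul_conjTranspose (H W : Matrix n n ℂ) (x : n → ℂ) :
    (W * H * Wᴴ).hermitianForm x = H.hermitianForm (Wᴴ *ᵥ x) := by
  simp only [hermitianForm_apply, ← mulVec_mulVec, star_mulVec, dotProduct_mulVec,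
    conjTranspose_conjTranspose]

variable [DecidableEq n]

theorem hermitianForm_diagonal (d : n → ℝ) (x : n → ℂ) :
    (diagonal fun k => (d k : ℂ)).hermitianForm x = ∑ k, d k * Complex.normSq (x k) := by
  simp only [hermitianForm_apply, dotProduct, mulVec_diagonal, Complex.re_sum,
    Complex.normSq_apply]
  refine Finset.sum_congr rfl fun k _ => ?_
  simp only [Pi.star_apply, Complex.star_def, Complex.mul_re, Complex.conj_re, Complex.ofReal_re,
    Complex.ofReal_im, Complex.conj_im, Complex.mul_im]
  ring

theorem equivalent_weightedSumSquares_of_eq_mul_diagonal_mul {H W : Matrix n n ℂ}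
    (hW : IsUnit W) {d : n → ℝ} (hH : H = W * diagonal (fun k => (d k : ℂ)) * Wᴴ) :
    H.hermitianForm.Equivalent (weightedSumSquares ℝ fun p : n × Fin 2 => d p.1) := by
  let := hW.star.invertible
  refine ⟨⟨((star W).toLinearEquiv' this).restrictScalars ℝ ≪≫ₗ complexPiEquivRealPi n,
    fun x => ?_⟩⟩
  change weightedSumSquares ℝ _ (complexPiEquivRealPi n (Wᴴ *ᵥ x)) = _
  rw [weightedSumSquares_complexPiEquivRealPi, hH, hermitianForm_mul_mul_conjTranspose,
    hermitianForm_diagonal]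

theorem sigPos_hermitianForm_of_eq_mul_diagonal_mul {H W : Matrix n n ℂ} (hW : IsUnit W)
    {d : n → ℝ} (hH : H = W * diagonal (fun k => (d k : ℂ)) * Wᴴ) :
    sigPos H.hermitianForm = 2 * Fintype.card {k // 0 < d k} := by
  rw [QuadraticForm.sigPos_of_equiv_weightedSumSquares
    (equivalent_weightedSumSquares_of_eq_mul_diagonal_mul hW hH), ← ncard_setOf_fst_prod_fin_two]

theorem sigNeg_hermitianForm_of_eq_mul_diagonal_mul {H W : Matrix n n ℂ} (hW : IsUnit W)
    {d : n → ℝ} (hH : H = W * diagonal (fun k => (d k : ℂ)) * Wᴴ) :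
    sigNeg H.hermitianForm = 2 * Fintype.card {k // d k < 0} := by
  rw [QuadraticForm.sigNeg_of_equiv_weightedSumSquares
    (equivalent_weightedSumSquares_of_eq_mul_diagonal_mul hW hH), ← ncard_setOf_fst_prod_fin_two]

theorem IsHermitian.card_eigenvalues_pos_neg_eq {H W : Matrix n n ℂ} (hH : H.IsHermitian)
    (hW : IsUnit W) {d : n → ℝ} (hd : H = W * diagonal (fun k => (d k : ℂ)) * Wᴴ) :
    Fintype.card {i // 0 < hH.eigenvalues i} = Fintype.card {k // 0 < d k} ∧
      Fintype.card {i // hH.eigenvalues i < 0} = Fintype.card {k // d k < 0} := by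
  have hspec : H = (hH.eigenvectorUnitary : Matrix n n ℂ) *
      diagonal (fun k => (hH.eigenvalues k : ℂ)) * (hH.eigenvectorUnitary : Matrix n n ℂ)ᴴ := by
    conv_lhs => rw [hH.spectral_theorem]
    rfl
  constructor <;> refine Nat.eq_of_mul_eq_mul_left two_pos ?_
  · rw [← sigPos_hermitianForm_of_eq_mul_diagonal_mul Unitary.isUnit_coe hspec,
      ← sigPos_hermitianForm_of_eq_mul_diagonal_mul hW hd]
  · rw [← sigNeg_hermitianForm_of_eq_mul_diagonal_mul Unitary.isUnit_coe hspec,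
      ← sigNeg_hermitianForm_of_eq_mul_diagonal_mul hW hd]

end Matrix

theorem bezoutMatrix_eq_coeffMatrix (n : ℕ) (f g : ℂ[X]) :
    bezoutMatrix n f g = coeffMatrix n n (bezoutian f g) := rfl

open Complex in
theorem neg_I_smul_bezoutMatrix_X_sub_C_mul (α : ℂ) {g : ℂ[X]} {m : ℕ} (hg : g.natDegree ≤ m) :
    -I • bezoutMatrix (m + 1) ((X - C α) * g) (((X - C α) * g).map (starRingEnd ℂ)) =
      mulMatrix (X - C α) (m + 1) m * (-I • bezoutMatrix m g (g.map (starRingEnd ℂ))) *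
          (mulMatrix (X - C α) (m + 1) m)ᴴ +
        ((2 * α.im : ℝ) : ℂ) • vecMulVec (fun i : Fin (m + 1) => (g.map (starRingEnd ℂ)).coeff i)
          (star fun i : Fin (m + 1) => (g.map (starRingEnd ℂ)).coeff i) := by
  have hconj : (X - C α).map (starRingEnd ℂ) = X - C (starRingEnd ℂ α) := by simp
  have hstar : (star fun i : Fin (m + 1) => (g.map (starRingEnd ℂ)).coeff i) =
      fun j : Fin (m + 1) => g.coeff j := by
    ext; simp
  have hI : -I * (α - starRingEnd ℂ α) = ((2 * α.im : ℝ) : ℂ) := by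
    rw [sub_conj]
    push_cast
    linear_combination (-2 * (α.im : ℂ)) * I_sq
  rw [Polynomial.map_mul, hconj, bezoutMatrix_eq_coeffMatrix, bezoutMatrix_eq_coeffMatrix,
    coeffMatrix_bezoutian_X_sub_C_mul _ _ hg (natDegree_map_le.trans hg), ← hconj,
    transpose_mulMatrix_map_star, smul_add, hstar, smul_smul, hI, Matrix.mul_smul,
    Matrix.smul_mul]

theorem exists_neg_I_smul_bezoutMatrix_eq {m : ℕ} {f : ℂ[X]} (hf : f.natDegree = m)
    (hcop : IsCoprime f (f.map (starRingEnd ℂ))) :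
    ∃ (W : Matrix (Fin m) (Fin m) ℂ) (r : Fin m → ℂ), IsUnit W ∧
      Multiset.map r Finset.univ.val = f.roots ∧
      -Complex.I • bezoutMatrix m f (f.map (starRingEnd ℂ)) =
        W * diagonal (fun k => ((2 * (r k).im : ℝ) : ℂ)) * Wᴴ := by
  induction m generalizing f with
  | zero =>
    refine ⟨1, Fin.elim0, isUnit_one, ?_, Subsingleton.elim _ _⟩
    rw [eq_C_of_natDegree_eq_zero hf, roots_C]
    rfl
  | succ m ih =>
    have hf0 : f ≠ 0 := by
      rintro rfl
      simp at hf
    obtain ⟨α, hα⟩ := Complex.exists_root (f := f) (natDegree_pos_iff_degree_pos.mp (by omega))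
    set g := f /ₘ (X - C α)
    have hfg : (X - C α) * g = f := mul_divByMonic_eq_iff_isRoot.mpr hα
    have hg : g.natDegree = m := by
      rw [natDegree_divByMonic _ (monic_X_sub_C α), hf, natDegree_X_sub_C, Nat.add_sub_cancel]
    have hfbar : f.map (starRingEnd ℂ) = (X - C (starRingEnd ℂ α)) * g.map (starRingEnd ℂ) := by
      rw [← hfg]
      simp
    have hgcop : IsCoprime g (g.map (starRingEnd ℂ)) := by
      rw [hfbar, ← hfg] at hcop
      exact hcop.of_mul_left_right.of_mul_right_right
    have hgα : (g.map (starRingEnd ℂ)).eval α ≠ 0 := by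
      intro h
      have := (isCoprime_iff_aeval_ne_zero _ _).mp hcop α
      simp [hfbar, h, hα.eq_zero] at this
    obtain ⟨W, r, hW, hr, hB⟩ := ih hg hgcop
    refine ⟨of fun i => Fin.cons ((g.map (starRingEnd ℂ)).coeff i)
      ((mulMatrix (X - C α) (m + 1) m * W : Matrix (Fin (m + 1)) (Fin m) ℂ) i), Fin.cons α r,
      isUnit_of_cons_mulMatrix_X_sub_C_mul ?_ hgα hW, ?_, ?_⟩
    · rw [degree_map]
      exact degree_le_natDegree.trans_lt (by rw [hg]; exact_mod_cast m.lt_succ_self)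
    · rw [← hfg, roots_mul (hfg ▸ hf0), roots_X_sub_C, ← hr, Fin.univ_val_map, Fin.univ_val_map,
        List.ofFn_succ]
      simp
    · rw [← hfg, neg_I_smul_bezoutMatrix_X_sub_C_mul α hg.le, hB,
        of_cons_mul_diagonal_mul_conjTranspose]
      simp [Matrix.mul_assoc, conjTranspose_mul]

theorem hermite_root_count_general (n : ℕ) (f : Polynomial ℂ) (hf : f.natDegree = n)
    (hcop : IsCoprime f (f.map (starRingEnd ℂ)))
    (hH : ((-Complex.I) • bezoutMatrix n f (f.map (starRingEnd ℂ))).IsHermitian) :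
    (f.roots.filter (fun z => 0 < z.im)).card
        = Fintype.card {i : Fin n // 0 < hH.eigenvalues i} ∧
    (f.roots.filter (fun z => z.im < 0)).card
        = Fintype.card {i : Fin n // hH.eigenvalues i < 0} := by
  obtain ⟨W, r, hW, hr, hB⟩ := exists_neg_I_smul_bezoutMatrix_eq hf hcop
  obtain ⟨hpos, hneg⟩ := hH.card_eigenvalues_pos_neg_eq hW hB
  rw [hpos, hneg, ← hr]
  simp only [Multiset.filter_map, Multiset.card_map, Fintype.card_subtype, Finset.card_def,
    Finset.filter_val]
  norm_num [mul_neg_iff]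

/-- (Hermite) Let `f` have degree `n`, no real roots, and no common roots with its
coefficient-wise conjugate `f̄`.  If `n₊`, `n₋` are the numbers of positive and negative
eigenvalues of the Hermitian matrix `-i·B(f, f̄)`, then `f` has exactly `n₊` roots in the
open upper half-plane and `n₋` roots in the open lower half-plane (with multiplicity). -/
theorem hermite_root_count (n : ℕ) (f : Polynomial ℂ) (hf : f.natDegree = n)
    (hreal : ∀ x : ℝ, f.eval (x : ℂ) ≠ 0)
    (hcop : IsCoprime f (f.map (starRingEnd ℂ)))
    (hH : ((-Complex.I) • bezoutMatrix n f (f.map (starRingEnd ℂ))).IsHermitian) :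
    (f.roots.filter (fun z => 0 < z.im)).card
        = Fintype.card {i : Fin n // 0 < hH.eigenvalues i} ∧
    (f.roots.filter (fun z => z.im < 0)).card
        = Fintype.card {i : Fin n // hH.eigenvalues i < 0} :=
  hermite_root_count_general n f hf hcop hH
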